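/- arXiv:2001.10782 — 2 statements merged into one kernel-verified Lean document; each statement's English description precedes it below -/
import Mathlib

section
/- Let ε be a real random variable with P(ε ≠ 0) > 0 and E[μ|ε|/(1+|ε|)] well-defined. Define g(c) = E[μ|ε|/(√c + |ε|)] for c > 0 where μ > 1. Then g is continuous and strictly decreasing in c on (0, ∞), with lim_{c→0+} g(c) = μ·P(ε ≠ 0) and lim_{c→∞} g(c) = 0; hence if μ·P(ε ≠ 0) > 1 there exists a unique c_H > 0 with g(c_H) = 1. -/
/-!
Pointwise, `c ↦ μ|x|/(√c + |x|)` is continuous on `(0, ∞)`, bounded by `|μ|`, decreasing,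
strictly so when `x ≠ 0`, and tends to `μ·1{x ≠ 0}` as `c → 0⁺` and to `0` as `c → ∞`.
Dominated convergence with the constant bound `|μ|` transfers continuity and both limits to the
expectation, strict monotonicity survives integration because `{ε ≠ 0}` has positive
probability, and the intermediate value theorem then produces the unique root of `g(c) = 1`.
-/

open MeasureTheory Filter Set Topology

theorem MeasureTheory.integral_lt_integral_of_le_of_measure_setOf_lt_ne_zero {α : Type*}
    [MeasurableSpace α] {P : Measure α} {f g : α → ℝ} (hf : Integrable f P)
    (hg : Integrable g P) (hle : ∀ x, f x ≤ g x) (hlt : P {x | f x < g x} ≠ 0) :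
    ∫ x, f x ∂P < ∫ x, g x ∂P := by
  rw [← sub_pos, ← integral_sub hg hf,
    integral_pos_iff_support_of_nonneg (fun x => sub_nonneg.2 (hle x)) (hg.sub hf)]
  have hsupp : (Function.support fun x => g x - f x) = {x | f x < g x} :=
    Set.ext fun x =>
      ⟨fun h => (hle x).lt_of_ne' (sub_ne_zero.1 h), fun h => sub_ne_zero.2 h.ne'⟩
  rw [hsupp]
  exact pos_iff_ne_zero.2 hlt

theorem existsUnique_eq_of_strictAntiOn_Ioi {f : ℝ → ℝ} {a L M y : ℝ}
    (hcont : ContinuousOn f (Ioi a)) (hanti : StrictAntiOn f (Ioi a))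
    (hL : Tendsto f (𝓝[>] a) (𝓝 L)) (hM : Tendsto f atTop (𝓝 M)) (hMy : M < y)
    (hyL : y < L) :
    ∃! c, a < c ∧ f c = y := by
  obtain ⟨b₁, hfb₁, hb₁⟩ :=
    ((hL.eventually (eventually_gt_nhds hyL)).and self_mem_nhdsWithin).exists
  obtain ⟨b₂, hfb₂, hb₁₂⟩ :=
    ((hM.eventually (eventually_lt_nhds hMy)).and (eventually_gt_atTop b₁)).exists
  have hIcc : Icc b₁ b₂ ⊆ Ioi a := fun x hx => lt_of_lt_of_le hb₁ hx.1
  obtain ⟨c, hc, hfc⟩ :=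
    intermediate_value_Icc' hb₁₂.le (hcont.mono hIcc) ⟨hfb₂.le, hfb₁.le⟩
  exact ⟨c, ⟨hIcc hc, hfc⟩,
    fun d ⟨hd, hfd⟩ => hanti.injOn hd (hIcc hc) (hfd.trans hfc.symm)⟩

section

variable {μ x c : ℝ}

theorem norm_mul_abs_div_sqrt_add_abs_le (hc : 0 < c) : ‖μ * |x| / (√c + |x|)‖ ≤ |μ| := by
  have hden : 0 < √c + |x| := by positivity
  rw [Real.norm_eq_abs, abs_div, abs_mul, abs_abs, abs_of_pos hden, div_le_iff₀ hden]
  nlinarith [abs_nonneg μ, Real.sqrt_pos.2 hc]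

theorem mul_abs_div_sqrt_add_abs_le_of_le (hμ : 0 ≤ μ) (hc : 0 < c) {d : ℝ} (hcd : c ≤ d) :
    μ * |x| / (√d + |x|) ≤ μ * |x| / (√c + |x|) := by
  have := Real.sqrt_pos.2 hc
  gcongr

theorem mul_abs_div_sqrt_add_abs_lt_of_lt (hμ : 0 < μ) (hx : x ≠ 0) (hc : 0 < c) {d : ℝ}
    (hcd : c < d) : μ * |x| / (√d + |x|) < μ * |x| / (√c + |x|) := by
  have := Real.sqrt_pos.2 hc
  have := abs_pos.2 hx
  gcongr

theorem continuousAt_mul_abs_div_sqrt_add_abs (hc : 0 < c) :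
    ContinuousAt (fun c => μ * |x| / (√c + |x|)) c := by
  have := Real.sqrt_pos.2 hc
  exact continuousAt_const.div (Real.continuous_sqrt.continuousAt.add continuousAt_const)
    (by positivity)

theorem tendsto_mul_abs_div_sqrt_add_abs_nhdsGT_zero (hx : x ≠ 0) :
    Tendsto (fun c => μ * |x| / (√c + |x|)) (𝓝[>] 0) (𝓝 μ) := by
  have hsqrt : Tendsto (√·) (𝓝[>] 0) (𝓝 0) := by
    simpa using (Real.continuous_sqrt.tendsto 0).mono_left nhdsWithin_le_nhds
  have hlim := tendsto_const_nhds (x := μ * |x|) |>.div (hsqrt.add_const |x|)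
    (by simpa using hx)
  rwa [zero_add, mul_div_cancel_right₀ _ (abs_ne_zero.2 hx)] at hlim

theorem tendsto_mul_abs_div_sqrt_add_abs_atTop :
    Tendsto (fun c => μ * |x| / (√c + |x|)) atTop (𝓝 0) :=
  tendsto_const_nhds.div_atTop (tendsto_atTop_add_const_right _ _ Real.tendsto_sqrt_atTop)

end

namespace MuScore

variable {Ω : Type*} [MeasurableSpace Ω] (P : Measure Ω) (ε : Ω → ℝ) (μ : ℝ)

/-- The expected μ-score `g(c) = E[H(ε/√c)]`. -/
noncomputable def expectedScore (c : ℝ) : ℝ := ∫ ω, μ * |ε ω| / (√c + |ε ω|) ∂P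

variable {P ε μ}

theorem integrable_score (hε : Measurable ε) [IsFiniteMeasure P] {c : ℝ} (hc : 0 < c) :
    Integrable (fun ω => μ * |ε ω| / (√c + |ε ω|)) P :=
  (integrable_const |μ|).mono'
    ((measurable_const.mul hε.abs).div (measurable_const.add hε.abs)).aestronglyMeasurable
    (ae_of_all _ fun _ => norm_mul_abs_div_sqrt_add_abs_le hc)

theorem tendsto_expectedScore (hε : Measurable ε) [IsFiniteMeasure P] {l : Filter ℝ}
    [l.IsCountablyGenerated] (hl : ∀ᶠ c in l, 0 < c) {h : Ω → ℝ}
    (hlim : ∀ ω, Tendsto (fun c => μ * |ε ω| / (√c + |ε ω|)) l (𝓝 (h ω))) :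
    Tendsto (expectedScore P ε μ) l (𝓝 (∫ ω, h ω ∂P)) :=
  tendsto_integral_filter_of_dominated_convergence (fun _ => |μ|)
    (hl.mono fun _ hc => (integrable_score hε hc).aestronglyMeasurable)
    (hl.mono fun _ hc => ae_of_all _ fun _ => norm_mul_abs_div_sqrt_add_abs_le hc)
    (integrable_const _) (ae_of_all _ hlim)

theorem continuousOn_expectedScore (hε : Measurable ε) [IsFiniteMeasure P] :
    ContinuousOn (expectedScore P ε μ) (Ioi 0) := fun _ hc =>
  tendsto_expectedScore hε self_mem_nhdsWithin fun _ =>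
    (continuousAt_mul_abs_div_sqrt_add_abs hc).continuousWithinAt

theorem strictAntiOn_expectedScore (hε : Measurable ε) [IsFiniteMeasure P] (hμ : 0 < μ)
    (hP : P {ω | ε ω ≠ 0} ≠ 0) : StrictAntiOn (expectedScore P ε μ) (Ioi 0) :=
  fun _ hc _ hd hcd =>
  integral_lt_integral_of_le_of_measure_setOf_lt_ne_zero (integrable_score hε hd)
    (integrable_score hε hc) (fun _ => mul_abs_div_sqrt_add_abs_le_of_le hμ.le hc hcd.le)
    fun h0 => hP <|
      measure_mono_null (fun _ hω => mul_abs_div_sqrt_add_abs_lt_of_lt hμ hω hc hcd) h0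

theorem tendsto_expectedScore_nhdsGT_zero (hε : Measurable ε) [IsFiniteMeasure P] :
    Tendsto (expectedScore P ε μ) (𝓝[>] 0) (𝓝 (μ * P.real {ω | ε ω ≠ 0})) := by
  have hs : MeasurableSet {ω | ε ω ≠ 0} := (hε (measurableSet_singleton 0)).compl
  have hind : ∫ ω, {ω | ε ω ≠ 0}.indicator (fun _ => μ) ω ∂P
      = μ * P.real {ω | ε ω ≠ 0} := by
    rw [integral_indicator_const _ hs, smul_eq_mul, mul_comm]
  rw [← hind]
  refine tendsto_expectedScore hε self_mem_nhdsWithin fun ω => ?_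
  by_cases hω : ε ω = 0
  · simpa [hω] using tendsto_const_nhds
  · rw [indicator_of_mem hω]
    exact tendsto_mul_abs_div_sqrt_add_abs_nhdsGT_zero hω

theorem tendsto_expectedScore_atTop (hε : Measurable ε) [IsFiniteMeasure P] :
    Tendsto (expectedScore P ε μ) atTop (𝓝 0) := by
  simpa using tendsto_expectedScore (h := fun _ => 0) hε (eventually_gt_atTop 0)
    fun _ => tendsto_mul_abs_div_sqrt_add_abs_atTop

end MuScore

open MuScore

theorem mu_score_identifiability_general {Ω : Type*} [MeasureSpace Ω]
    (P : Measure Ω) [IsProbabilityMeasure P] (ε : Ω → ℝ) (hε : Measurable ε)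
    (μ : ℝ) (hμ : 1 < μ)
    (hpos : 0 < (P {ω | ε ω ≠ 0}).toReal) :
    ContinuousOn (fun c : ℝ => ∫ ω, μ * |ε ω| / (Real.sqrt c + |ε ω|) ∂P) (Set.Ioi 0) ∧
    StrictAntiOn (fun c : ℝ => ∫ ω, μ * |ε ω| / (Real.sqrt c + |ε ω|) ∂P) (Set.Ioi 0) ∧
    Tendsto (fun c : ℝ => ∫ ω, μ * |ε ω| / (Real.sqrt c + |ε ω|) ∂P)
      (nhdsWithin 0 (Set.Ioi 0)) (nhds (μ * (P {ω | ε ω ≠ 0}).toReal)) ∧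
    Tendsto (fun c : ℝ => ∫ ω, μ * |ε ω| / (Real.sqrt c + |ε ω|) ∂P)
      atTop (nhds 0) ∧
    (1 < μ * (P {ω | ε ω ≠ 0}).toReal →
      ∃! c : ℝ, 0 < c ∧ (∫ ω, μ * |ε ω| / (Real.sqrt c + |ε ω|) ∂P) = 1) := by
  have hcont := continuousOn_expectedScore (P := P) (μ := μ) hε
  have hanti := strictAntiOn_expectedScore hε (zero_lt_one.trans hμ)
    (ENNReal.toReal_pos_iff.1 hpos).1.ne'
  have hzero := tendsto_expectedScore_nhdsGT_zero (P := P) (μ := μ) hε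
  have htop := tendsto_expectedScore_atTop (P := P) (μ := μ) hε
  exact ⟨hcont, hanti, hzero, htop,
    existsUnique_eq_of_strictAntiOn_Ioi hcont hanti hzero htop one_pos⟩

theorem mu_score_identifiability {Ω : Type*} [MeasureSpace Ω]
    (P : Measure Ω) [IsProbabilityMeasure P] (ε : Ω → ℝ) (hε : Measurable ε)
    (μ : ℝ) (hμ : 1 < μ)
    (hpos : 0 < (P {ω | ε ω ≠ 0}).toReal)
    (hint : Integrable (fun ω => μ * |ε ω| / (1 + |ε ω|)) P) :
    ContinuousOn (fun c : ℝ => ∫ ω, μ * |ε ω| / (Real.sqrt c + |ε ω|) ∂P) (Set.Ioi 0) ∧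
    StrictAntiOn (fun c : ℝ => ∫ ω, μ * |ε ω| / (Real.sqrt c + |ε ω|) ∂P) (Set.Ioi 0) ∧
    Tendsto (fun c : ℝ => ∫ ω, μ * |ε ω| / (Real.sqrt c + |ε ω|) ∂P)
      (nhdsWithin 0 (Set.Ioi 0)) (nhds (μ * (P {ω | ε ω ≠ 0}).toReal)) ∧
    Tendsto (fun c : ℝ => ∫ ω, μ * |ε ω| / (Real.sqrt c + |ε ω|) ∂P)
      atTop (nhds 0) ∧
    (1 < μ * (P {ω | ε ω ≠ 0}).toReal →
      ∃! c : ℝ, 0 < c ∧ (∫ ω, μ * |ε ω| / (Real.sqrt c + |ε ω|) ∂P) = 1) :=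
  mu_score_identifiability_general P ε hε μ hμ hpos
end

section
/- Let ε be a real random variable with P(ε ≠ 0) > 1/2. Define g(c) = E[2ε²/(c + ε²)] for c > 0 (the Cauchy score identifiability function). Then g is continuous, strictly decreasing on (0,∞), g(c) → 2·P(ε ≠ 0) > 1 as c → 0+, and g(c) → 0 as c → ∞; hence there is a unique c_H > 0 with g(c_H) = 1. -/
/-!
Each summand `2x²/(c + x²)` lies in `[0, 2]`, is continuous and decreasing in `c > 0`, strictly so
when `x ≠ 0`, tends to `2 · 1{x ≠ 0}` as `c → 0+` and to `0` as `c → ∞`. Dominated convergence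
transfers continuity and both limits to the expectation, and strict decrease survives integration
because `{ε ≠ 0}` has positive mass. Since `2 P(ε ≠ 0) > 1 > 0`, the intermediate value theorem
and injectivity give exactly one solution of `g(c) = 1`.
-/

open MeasureTheory Filter Set Topology

theorem StrictAntiOn.existsUnique_eq_of_tendsto_Ioi {f : ℝ → ℝ} {a y L M : ℝ}
    (hcont : ContinuousOn f (Ioi a)) (hanti : StrictAntiOn f (Ioi a))
    (hleft : Tendsto f (𝓝[>] a) (𝓝 L)) (htop : Tendsto f atTop (𝓝 M)) (hM : M < y) (hL : y < L) :
    ∃! c, a < c ∧ f c = y := by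
  obtain ⟨b₁, hyb₁, hab₁⟩ :=
    ((hleft.eventually (eventually_gt_nhds hL)).and self_mem_nhdsWithin).exists
  obtain ⟨b₂, hb₂y, hb₁₂⟩ :=
    ((htop.eventually (eventually_lt_nhds hM)).and (eventually_ge_atTop b₁)).exists
  have hIcc : Icc b₁ b₂ ⊆ Ioi a := fun x hx => lt_of_lt_of_le hab₁ hx.1
  obtain ⟨c, hc, hfc⟩ :=
    intermediate_value_Icc' hb₁₂ (hcont.mono hIcc) ⟨hb₂y.le, hyb₁.le⟩
  refine ⟨c, ⟨hIcc hc, hfc⟩, fun d ⟨had, hfd⟩ => ?_⟩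
  exact (hanti.injOn.eq_iff had (hIcc hc)).mp (hfd.trans hfc.symm)

/-- `H (x / √c)` for the Cauchy score `H x = 2x² / (1 + x²)`. -/
noncomputable def cauchyScoreScaled (c x : ℝ) : ℝ := 2 * x ^ 2 / (c + x ^ 2)

namespace cauchyScoreScaled

theorem nonneg {c : ℝ} (hc : 0 ≤ c) (x : ℝ) : 0 ≤ cauchyScoreScaled c x := by
  unfold cauchyScoreScaled; positivity

theorem le_two {c : ℝ} (hc : 0 ≤ c) (x : ℝ) : cauchyScoreScaled c x ≤ 2 :=
  div_le_of_le_mul₀ (by positivity) zero_le_two (by nlinarith)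

theorem norm_le_two {c : ℝ} (hc : 0 ≤ c) (x : ℝ) : ‖cauchyScoreScaled c x‖ ≤ 2 := by
  rw [Real.norm_of_nonneg (nonneg hc x)]; exact le_two hc x

theorem antitoneOn (x : ℝ) : AntitoneOn (cauchyScoreScaled · x) (Ioi 0) := by
  intro a ha b _ hab
  exact div_le_div_of_nonneg_left (by positivity)
    (add_pos_of_pos_of_nonneg ha (sq_nonneg x)) (by linarith)

theorem strictAntiOn {x : ℝ} (hx : x ≠ 0) : StrictAntiOn (cauchyScoreScaled · x) (Ioi 0) := by
  intro a ha b hb hab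
  have hx2 : 0 < x ^ 2 := by positivity
  exact div_lt_div_of_pos_left (by positivity) (add_pos ha hx2) (by linarith)

theorem continuousOn (x : ℝ) : ContinuousOn (cauchyScoreScaled · x) (Ioi 0) :=
  continuousOn_const.div (continuousOn_id.add continuousOn_const)
    fun _ hc => (add_pos_of_pos_of_nonneg hc (sq_nonneg x)).ne'

theorem tendsto_nhdsGT_zero (x : ℝ) :
    Tendsto (cauchyScoreScaled · x) (𝓝[>] (0 : ℝ)) (𝓝 ({y | y ≠ 0}.indicator (fun _ => 2) x)) := by
  by_cases hx : x = 0
  · simp [cauchyScoreScaled, hx]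
  · have hx2 : x ^ 2 ≠ 0 := pow_ne_zero 2 hx
    have hcont : ContinuousAt (cauchyScoreScaled · x) 0 :=
      continuousAt_const.div (continuousAt_id.add continuousAt_const) (by simpa using hx2)
    simpa [cauchyScoreScaled, hx, hx2] using hcont.tendsto.mono_left nhdsWithin_le_nhds

theorem tendsto_atTop_zero (x : ℝ) : Tendsto (cauchyScoreScaled · x) atTop (𝓝 0) :=
  tendsto_const_nhds.div_atTop (tendsto_atTop_add_const_right _ _ tendsto_id)

end cauchyScoreScaled

section CauchyScoreExpectation

variable {Ω : Type*} [MeasurableSpace Ω] {μ : Measure Ω} {ε : Ω → ℝ}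

noncomputable def cauchyScoreMean (μ : Measure Ω) (ε : Ω → ℝ) (c : ℝ) : ℝ :=
  ∫ ω, cauchyScoreScaled c (ε ω) ∂μ

theorem aestronglyMeasurable_cauchyScoreScaled (hε : AEMeasurable ε μ) (c : ℝ) :
    AEStronglyMeasurable (fun ω => cauchyScoreScaled c (ε ω)) μ :=
  (by unfold cauchyScoreScaled; fun_prop : Measurable (cauchyScoreScaled c)).comp_aemeasurable
    hε |>.aestronglyMeasurable

variable [IsFiniteMeasure μ]

theorem integrable_cauchyScoreScaled (hε : AEMeasurable ε μ) {c : ℝ} (hc : 0 ≤ c) :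
    Integrable (fun ω => cauchyScoreScaled c (ε ω)) μ :=
  (integrable_const 2).mono' (aestronglyMeasurable_cauchyScoreScaled hε c)
    (.of_forall fun ω => cauchyScoreScaled.norm_le_two hc (ε ω))

theorem continuousOn_cauchyScoreMean (hε : AEMeasurable ε μ) :
    ContinuousOn (cauchyScoreMean μ ε) (Ioi 0) :=
  continuousOn_of_dominated (fun c _ => aestronglyMeasurable_cauchyScoreScaled hε c)
    (fun _ hc => .of_forall fun ω => cauchyScoreScaled.norm_le_two hc.le (ε ω))
    (integrable_const 2) (.of_forall fun ω => cauchyScoreScaled.continuousOn (ε ω))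

theorem strictAntiOn_cauchyScoreMean (hε : AEMeasurable ε μ) (hμ : μ {ω | ε ω ≠ 0} ≠ 0) :
    StrictAntiOn (cauchyScoreMean μ ε) (Ioi 0) := by
  intro a ha b hb hab
  have hia := integrable_cauchyScoreScaled hε (le_of_lt ha)
  have hib := integrable_cauchyScoreScaled hε (le_of_lt hb)
  have hsupport :
      Function.support (fun ω => cauchyScoreScaled a (ε ω) - cauchyScoreScaled b (ε ω)) =
        {ω | ε ω ≠ 0} := by
    ext ω
    by_cases h : ε ω = 0
    · simp [h, cauchyScoreScaled]
    · simpa [h, sub_eq_zero] using (cauchyScoreScaled.strictAntiOn h ha hb hab).ne'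
  have hpos : 0 < ∫ ω, cauchyScoreScaled a (ε ω) - cauchyScoreScaled b (ε ω) ∂μ := by
    rw [integral_pos_iff_support_of_nonneg_ae, hsupport]
    · exact pos_iff_ne_zero.mpr hμ
    · exact .of_forall fun ω => sub_nonneg.mpr (cauchyScoreScaled.antitoneOn (ε ω) ha hb hab.le)
    · exact hia.sub hib
  rw [integral_sub hia hib] at hpos
  exact sub_pos.mp hpos

theorem tendsto_cauchyScoreMean_nhdsGT_zero (hε : AEMeasurable ε μ) :
    Tendsto (cauchyScoreMean μ ε) (𝓝[>] 0) (𝓝 (2 * μ.real {ω | ε ω ≠ 0})) := by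
  have hlim := tendsto_integral_filter_of_dominated_convergence (μ := μ) (l := 𝓝[>] (0 : ℝ))
    (f := {ω | ε ω ≠ 0}.indicator fun _ => 2) (fun _ => 2)
    (.of_forall fun c => aestronglyMeasurable_cauchyScoreScaled hε c)
    (eventually_nhdsWithin_of_forall fun _ hc => .of_forall fun ω =>
      cauchyScoreScaled.norm_le_two hc.le (ε ω))
    (integrable_const 2) (.of_forall fun ω => cauchyScoreScaled.tendsto_nhdsGT_zero (ε ω))
  have hS : NullMeasurableSet {ω | ε ω ≠ 0} μ :=
    hε.nullMeasurableSet_preimage (measurableSet_singleton 0).compl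
  rwa [integral_indicator₀ hS, setIntegral_const, smul_eq_mul, mul_comm] at hlim

theorem tendsto_cauchyScoreMean_atTop (hε : AEMeasurable ε μ) :
    Tendsto (cauchyScoreMean μ ε) atTop (𝓝 0) := by
  have hlim := tendsto_integral_filter_of_dominated_convergence (μ := μ) (fun _ => (2 : ℝ))
    (.of_forall fun c => aestronglyMeasurable_cauchyScoreScaled hε c)
    ((eventually_gt_atTop 0).mono fun _ hc => .of_forall fun ω =>
      cauchyScoreScaled.norm_le_two hc.le (ε ω))
    (integrable_const 2) (.of_forall fun ω => cauchyScoreScaled.tendsto_atTop_zero (ε ω))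
  rwa [integral_zero] at hlim

end CauchyScoreExpectation

theorem cauchy_score_identifiability {Ω : Type*} [MeasureSpace Ω]
    (P : Measure Ω) [IsProbabilityMeasure P] (ε : Ω → ℝ) (hε : Measurable ε)
    (hpos : 1 / 2 < (P {ω | ε ω ≠ 0}).toReal) :
    ContinuousOn (fun c : ℝ => ∫ ω, 2 * (ε ω) ^ 2 / (c + (ε ω) ^ 2) ∂P) (Set.Ioi 0) ∧
    StrictAntiOn (fun c : ℝ => ∫ ω, 2 * (ε ω) ^ 2 / (c + (ε ω) ^ 2) ∂P) (Set.Ioi 0) ∧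
    Tendsto (fun c : ℝ => ∫ ω, 2 * (ε ω) ^ 2 / (c + (ε ω) ^ 2) ∂P)
      (nhdsWithin 0 (Set.Ioi 0)) (nhds (2 * (P {ω | ε ω ≠ 0}).toReal)) ∧
    (1 < 2 * (P {ω | ε ω ≠ 0}).toReal) ∧
    Tendsto (fun c : ℝ => ∫ ω, 2 * (ε ω) ^ 2 / (c + (ε ω) ^ 2) ∂P) atTop (nhds 0) ∧
    (∃! c : ℝ, 0 < c ∧ (∫ ω, 2 * (ε ω) ^ 2 / (c + (ε ω) ^ 2) ∂P) = 1) := by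
  have hμ : P {ω | ε ω ≠ 0} ≠ 0 := fun h => by norm_num [h] at hpos
  have hgt : 1 < 2 * (P {ω | ε ω ≠ 0}).toReal := by linarith
  have hcont := continuousOn_cauchyScoreMean (μ := P) hε.aemeasurable
  have hanti := strictAntiOn_cauchyScoreMean hε.aemeasurable hμ
  have hzero := tendsto_cauchyScoreMean_nhdsGT_zero (μ := P) hε.aemeasurable
  have htop := tendsto_cauchyScoreMean_atTop (μ := P) hε.aemeasurable
  exact ⟨hcont, hanti, hzero, hgt, htop,
    hanti.existsUnique_eq_of_tendsto_Ioi hcont hzero htop one_pos hgt⟩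
end
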